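/- Let (A, R, D) be a strongly consistent EAFC and ADF^EAFC its corresponding ADF. If X ⊆ A is a conflict-free extension of (A, R, D) (and thus of ADF^EAFC), then the discarded set X^+ of X in (A, R, D) coincides with the partially acyclic discarded set X^{p+} of X in ADF^EAFC. -/

import Mathlib

open Classical

universe u

namespace Dialectical

variable {α : Type u}

/-! ### Two-valued (partial) interpretations -/

/-- A partial two-valued interpretation: `some true` = t, `some false` = f, `none` = undefined. -/
abbrev Interp (α : Type u) := α → Option Bool

/-- The domain of an interpretation. -/
def idom (v : Interp α) : Set α := {a | v a ≠ none}

/-- The set of arguments mapped to t. -/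
def tset (v : Interp α) : Set α := {a | v a = some true}

/-- The set of arguments mapped to f. -/
def fset (v : Interp α) : Set α := {a | v a = some false}

/-- `w` is a completion of `v` to the set `Z`. -/
def Completion (v w : Interp α) (Z : Set α) : Prop :=
  idom w = Z ∧ ∀ a ∈ idom v, w a = v a

/-- The interpretation assigning t on `T` and f on `F' \ T`. -/
noncomputable def mkInterp (T F' : Set α) : Interp α :=
  fun a => if a ∈ T then some true else if a ∈ F' then some false else none

/-! ### Abstract dialectical frameworks -/

/-- An abstract dialectical framework: links and acceptance conditions
(`true` = in, `false` = out). -/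
structure ADF (α : Type u) where
  L : α → α → Prop
  C : α → Set α → Bool

namespace ADF

variable (D : ADF α)

/-- The parents of an argument. -/
def par (a : α) : Set α := {p | D.L p a}

/-- Evaluating the acceptance condition of `s` under an interpretation. -/
def evalCond (s : α) (w : Interp α) : Bool := D.C s (tset w ∩ D.par s)

/-- `s` is decisively in w.r.t. `v`. -/
def DecisivelyIn (v : Interp α) (s : α) : Prop :=
  ∀ w : Interp α, Completion v w (idom v ∪ D.par s) → D.evalCond s w = true

/-- `s` is decisively out w.r.t. `v`. -/
def DecisivelyOut (v : Interp α) (s : α) : Prop :=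
  ∀ w : Interp α, Completion v w (idom v ∪ D.par s) → D.evalCond s w = false

/-- `v` is a minimal decisively in interpretation for `s` (`v ∈ min_dec(in,s)`). -/
def MinDecIn (v : Interp α) (s : α) : Prop :=
  D.DecisivelyIn v s ∧
  ∀ w : Interp α, D.DecisivelyIn w s → tset w ⊆ tset v → fset w ⊆ fset v →
    tset w = tset v ∧ fset w = fset v

/-- `pd` is a positive dependency function on `X`. -/
def PDFun (X : Set α) (pd : α → Option (Interp α)) : Prop :=
  ∀ a ∈ X,
    (∀ v, pd a = some v → D.MinDecIn v a ∧ tset v ⊆ X) ∧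
    (pd a = none → ¬ ∃ v, D.MinDecIn v a ∧ tset v ⊆ X)

end ADF

/-- The subset of `X` on which `pd` is non-null. -/
def soundDom (X : Set α) (pd : α → Option (Interp α)) : Set α :=
  {a ∈ X | pd a ≠ none}

namespace ADF
variable (D : ADF α)

/-- `pd` is a maximally sound pd-function of `X`. -/
def MaxSound (X : Set α) (pd : α → Option (Interp α)) : Prop :=
  D.PDFun X pd ∧
  ¬ ∃ (X'' : Set α) (pd' : α → Option (Interp α)),
      D.PDFun X'' pd' ∧ (∀ a ∈ X'', pd' a ≠ none) ∧
      soundDom X pd ⊂ X'' ∧ X'' ⊆ X ∧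
      ∀ a ∈ soundDom X pd, pd' a = pd a

end ADF

/-- The t-part of the interpretation assigned by `pd` to `a`. -/
def pdT (pd : α → Option (Interp α)) (a : α) : Set α :=
  {b | ∃ v, pd a = some v ∧ b ∈ tset v}

/-- The f-part of the interpretation assigned by `pd` to `a`. -/
def pdF (pd : α → Option (Interp α)) (a : α) : Set α :=
  {b | ∃ v, pd a = some v ∧ b ∈ fset v}

namespace ADF

variable (D : ADF α)

end ADF

/-- `(Fs, G, B)` is a partially acyclic positive dependency evaluation for `x`
based on the pd-function `pd` of `X`. -/
def IsPAEvalWith (pd : α → Option (Interp α)) (X : Set α)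
    (x : α) (Fs : Set α) (G : List α) (B : Set α) : Prop :=
  (∀ a ∈ G, a ∉ Fs) ∧ G.Nodup ∧
  x ∈ X ∧ Fs ⊆ X ∧ (∀ a ∈ G, a ∈ X) ∧
  (∀ a ∈ Fs, pd a ≠ none) ∧ (∀ a ∈ G, pd a ≠ none) ∧
  (G = [] → x ∈ Fs) ∧ (G ≠ [] → G.getLast? = some x) ∧
  (∀ i : ℕ, ∀ h : i < G.length,
      pdT pd (G.get ⟨i, h⟩) ⊆
        Fs ∪ {b | ∃ j : ℕ, ∃ hj : j < G.length, j < i ∧ G.get ⟨j, hj⟩ = b}) ∧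
  (∀ a ∈ Fs, pdT pd a ⊆ Fs) ∧
  (∀ a ∈ Fs, ∃ b ∈ Fs, a ∈ pdT pd b) ∧
  B = (⋃ a ∈ Fs, pdF pd a) ∪ ⋃ a ∈ {c | c ∈ G}, pdF pd a

namespace ADF
variable (D : ADF α)

/-- `(Fs, G, B)` is a partially acyclic positive dependency evaluation for `x` on `X`. -/
def PAEval (X : Set α) (x : α) (Fs : Set α) (G : List α) (B : Set α) : Prop :=
  ∃ pd, D.MaxSound X pd ∧ IsPAEvalWith pd X x Fs G B

/-- `(G, B)` is an acyclic positive dependency evaluation for `x` on `X`. -/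
def AcyclicEval (X : Set α) (x : α) (G : List α) (B : Set α) : Prop :=
  D.PAEval X x ∅ G B

/-- The standard discarded set `X⁺`. -/
def stdDiscarded (X : Set α) : Set α :=
  {a | ∀ Fs G B, D.PAEval Set.univ a Fs G B → (B ∩ X).Nonempty}

/-- The partially acyclic discarded set `X^{p+}`. -/
def pDiscarded (X : Set α) : Set α :=
  {a | ¬ ∃ Fs G B, D.PAEval Set.univ a Fs G B ∧ Fs ⊆ X ∧ B ∩ X = ∅}

/-- The acyclic discarded set `X^{a+}`. -/
def aDiscarded (X : Set α) : Set α :=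
  {a | ∀ G B, D.AcyclicEval Set.univ a G B → (B ∩ X).Nonempty}

/-- The standard range of `X`. -/
noncomputable def stdRange (X : Set α) : Interp α := mkInterp X (D.stdDiscarded X \ X)

/-- The partially acyclic range of `X`. -/
noncomputable def pRange (X : Set α) : Interp α := mkInterp X (D.pDiscarded X \ X)

/-- The acyclic range of `X`. -/
noncomputable def aRange (X : Set α) : Interp α := mkInterp X (D.aDiscarded X \ X)

/-- Conflict-freeness in an ADF. -/
def ConflictFree (X : Set α) : Prop := ∀ s ∈ X, D.C s (X ∩ D.par s) = true

/-- pd-acyclic conflict-freeness in an ADF. -/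
def PDAcyclicCF (X : Set α) : Prop :=
  ∀ a ∈ X, ∃ G B, D.AcyclicEval X a G B ∧ B ∩ X = ∅

def CCAdmissible (X : Set α) : Prop :=
  D.ConflictFree X ∧ ∀ e ∈ X, D.DecisivelyIn (D.stdRange X) e

def CA2Admissible (X : Set α) : Prop :=
  D.ConflictFree X ∧ ∀ e ∈ X, D.DecisivelyIn (D.pRange X) e

def AAAdmissible (X : Set α) : Prop :=
  D.PDAcyclicCF X ∧ ∀ e ∈ X, D.DecisivelyIn (D.aRange X) e

def CCComplete (X : Set α) : Prop :=
  D.CCAdmissible X ∧ ∀ e, D.DecisivelyIn (D.stdRange X) e → e ∈ X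

def CA2Complete (X : Set α) : Prop :=
  D.CA2Admissible X ∧ ∀ e, D.DecisivelyIn (D.pRange X) e → e ∈ X

def AAComplete (X : Set α) : Prop :=
  D.AAAdmissible X ∧ ∀ e, D.DecisivelyIn (D.aRange X) e → e ∈ X

def CCPreferred (X : Set α) : Prop :=
  D.CCAdmissible X ∧ ∀ Y, D.CCAdmissible Y → X ⊆ Y → X = Y

def CA2Preferred (X : Set α) : Prop :=
  D.CA2Admissible X ∧ ∀ Y, D.CA2Admissible Y → X ⊆ Y → X = Y

def AAPreferred (X : Set α) : Prop :=
  D.AAAdmissible X ∧ ∀ Y, D.AAAdmissible Y → X ⊆ Y → X = Y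

/-- `X` is a model of the ADF. -/
def IsModel (X : Set α) : Prop :=
  D.ConflictFree X ∧ ∀ a, a ∉ X → D.C a (X ∩ D.par a) = false

/-- `X` is a stable extension of the ADF. -/
def IsStable (X : Set α) : Prop :=
  D.PDAcyclicCF X ∧ D.aDiscarded X = Xᶜ

/-- `X` is the grounded extension (the least cc-complete extension). -/
def IsGrounded (X : Set α) : Prop :=
  D.CCComplete X ∧ ∀ Y, D.CCComplete Y → X ⊆ Y

/-- `X` is the acyclic grounded extension (the least aa-complete extension). -/
def IsAcyclicGrounded (X : Set α) : Prop :=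
  D.AAComplete X ∧ ∀ Y, D.AAComplete Y → X ⊆ Y

/-- The link `(r,s)` is supporting. -/
def Supporting (r s : α) : Prop :=
  ¬ ∃ R' ⊆ D.par s, D.C s R' = true ∧ D.C s (R' ∪ {r}) = false

/-- The link `(r,s)` is attacking. -/
def Attacking (r s : α) : Prop :=
  ¬ ∃ R' ⊆ D.par s, D.C s R' = false ∧ D.C s (R' ∪ {r}) = true

/-- Bipolar ADFs. -/
def IsBADF : Prop := ∀ r s, D.L r s → D.Supporting r s ∨ D.Attacking r s

/-- Positive dependency acyclic ADFs (AADF⁺): every partially acyclic evaluation is acyclic. -/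
def IsAADFplus : Prop := ∀ X x Fs G B, D.PAEval X x Fs G B → Fs = ∅

end ADF

/-! ### Frameworks with sets of attacking arguments (SETAFs) -/

/-- A framework with sets of attacking arguments. -/
structure SETAF (α : Type u) where
  R : Set α → α → Prop
  nonempty_of_R : ∀ S a, R S a → S.Nonempty

namespace SETAF

variable (sf : SETAF α)

/-- `X` is conflict-free in the SETAF. -/
def ConflictFree (X : Set α) : Prop := ¬ ∃ S ⊆ X, ∃ a ∈ X, sf.R S a

/-- The discarded set of `X` in the SETAF. -/
def discarded (X : Set α) : Set α := {b | ∃ S ⊆ X, sf.R S b}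

/-- `X` defends `a` in the SETAF. -/
def Defends (X : Set α) (a : α) : Prop :=
  ∀ S, sf.R S a → ∃ s ∈ S, s ∈ sf.discarded X

def Admissible (X : Set α) : Prop := sf.ConflictFree X ∧ ∀ a ∈ X, sf.Defends X a

def Complete (X : Set α) : Prop := sf.Admissible X ∧ ∀ a, sf.Defends X a → a ∈ X

def Preferred (X : Set α) : Prop :=
  sf.Admissible X ∧ ∀ Y, sf.Admissible Y → X ⊆ Y → X = Y

/-- `X` is the grounded extension: the least complete extension. -/
def IsGrounded (X : Set α) : Prop := sf.Complete X ∧ ∀ Y, sf.Complete Y → X ⊆ Y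

def Stable (X : Set α) : Prop := sf.ConflictFree X ∧ sf.discarded X = Xᶜ

/-- The ADF corresponding to a SETAF. -/
noncomputable def toADF : ADF α where
  L x y := ∃ B : Set α, x ∈ B ∧ sf.R B y
  C a B := decide (¬ ∃ S, sf.R S a ∧ S ⊆ B)

end SETAF

/-! ### Extended argumentation frameworks with collective defense attacks (EAFCs) -/

/-- An EAFC: binary attacks `R` and collective defense attacks `D` on attacks. -/
structure EAFC (α : Type u) where
  R : α → α → Prop
  D : Set α → α → α → Prop
  nonempty_of_D : ∀ C a b, D C a b → C.Nonempty
  attack_of_D : ∀ C a b, D C a b → R a b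

namespace EAFC

variable (E : EAFC α)

/-- `a` defeats `b` w.r.t. `X`. -/
def Defeats (X : Set α) (a b : α) : Prop :=
  E.R a b ∧ ¬ ∃ C ⊆ X, E.D C a b

/-- `RS` is a reinstatement set on `X` for the defeat of `b` by `a`. -/
def Reinstatement (X : Set α) (RS : Set (α × α)) (a b : α) : Prop :=
  RS.Finite ∧
  (∀ p ∈ RS, p.1 ∈ X ∧ E.Defeats X p.1 p.2) ∧
  (a, b) ∈ RS ∧
  ∀ p ∈ RS, ∀ C : Set α, E.D C p.1 p.2 → ∃ q ∈ RS, q.2 ∈ C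

/-- The discarded set `X⁺` of `X` in the EAFC. -/
def discarded (X : Set α) : Set α :=
  {b | ∃ a ∈ X, E.Defeats X a b ∧ ∃ RS, E.Reinstatement X RS a b}

/-- `X` defends `a` in the EAFC. -/
def Defends (X : Set α) (a : α) : Prop :=
  ∀ b, E.Defeats X b a → b ∈ E.discarded X

/-- `X` is conflict-free in the EAFC. -/
def ConflictFree (X : Set α) : Prop := ¬ ∃ a ∈ X, ∃ b ∈ X, E.Defeats X a b

def Admissible (X : Set α) : Prop := E.ConflictFree X ∧ ∀ a ∈ X, E.Defends X a

def Complete (X : Set α) : Prop := E.Admissible X ∧ ∀ a, E.Defends X a → a ∈ X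

def Preferred (X : Set α) : Prop :=
  E.Admissible X ∧ ∀ Y, E.Admissible Y → X ⊆ Y → X = Y

def Stable (X : Set α) : Prop :=
  E.ConflictFree X ∧ ∀ b, b ∉ X → ∃ a ∈ X, E.Defeats X a b

/-- The characteristic function of the EAFC. -/
def charFun (X : Set α) : Set α := {a | E.Defends X a}

/-- The grounded extension of the EAFC. -/
def grounded : Set α := ⋃ i : ℕ, E.charFun^[i] ∅

/-- Every argument has finitely many attackers, every attack finitely many defense attackers. -/
def Finitary : Prop :=
  (∀ a, {b | E.R b a}.Finite) ∧ ∀ a b, {C | E.D C a b}.Finite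

/-- Strong consistency of an EAFC. -/
def StronglyConsistent : Prop :=
  ¬ ∃ (x y z : α) (X : Set α), E.R x y ∧ x ∈ X ∧ E.D X z y

/-- The EAFC is bounded hierarchical. -/
def BoundedHierarchical : Prop :=
  ∃ n : ℕ, ∃ hn : 0 < n,
    ∃ (As : Fin n → Set α) (Rs : Fin n → α → α → Prop)
      (Ds : Fin n → Set α → α → α → Prop),
      (∀ C a b, ¬ Ds ⟨n - 1, Nat.sub_lt hn one_pos⟩ C a b) ∧
      (Set.univ = ⋃ i, As i) ∧
      (∀ a b, E.R a b ↔ ∃ i, Rs i a b) ∧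
      (∀ C a b, E.D C a b ↔ ∃ i, Ds i C a b) ∧
      (∀ i a b, Rs i a b → a ∈ As i ∧ b ∈ As i) ∧
      (∀ i C a b, Ds i C a b → Rs i a b ∧
        ∃ h : (i : ℕ) + 1 < n, C ⊆ As ⟨(i : ℕ) + 1, h⟩)

/-- The ADF corresponding to a strongly consistent EAFC. -/
noncomputable def toADF : ADF α where
  L a b := E.R a b ∨ ∃ (c : α) (X : Set α), a ∈ X ∧ E.D X c b
  C a B := decide (¬ ∃ x ∈ B, E.R x a ∧ ¬ ∃ B' ⊆ B, E.D B' x a)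

end EAFC

/-! ### Argumentation frameworks with necessities (AFNs) -/

/-- An AFN: binary attacks `R` and necessity relation `N`. -/
structure AFN (α : Type u) where
  R : α → α → Prop
  N : Set α → α → Prop
  nonempty_of_N : ∀ B a, N B a → B.Nonempty

namespace AFN

variable (fn : AFN α)

/-- `G` is a powerful sequence for `a` on `X`. -/
def PowerfulSeq (X : Set α) (G : List α) (a : α) : Prop :=
  G ≠ [] ∧ (∀ b ∈ G, b ∈ X) ∧ G.getLast? = some a ∧
  ∀ i : ℕ, ∀ h : i < G.length, ∀ B : Set α, fn.N B (G.get ⟨i, h⟩) →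
    ∃ j : ℕ, ∃ hj : j < G.length, j < i ∧ G.get ⟨j, hj⟩ ∈ B

/-- `a` is powerful in `X`. -/
def Powerful (X : Set α) (a : α) : Prop :=
  a ∈ X ∧ ∃ G, fn.PowerfulSeq X G a

/-- `X` is coherent. -/
def Coherent (X : Set α) : Prop := ∀ a ∈ X, fn.Powerful X a

/-- The discarded set `X^att` of `X` in the AFN. -/
def discardedAtt (X : Set α) : Set α :=
  {a | ∀ C, fn.Coherent C → a ∈ C → ∃ c ∈ C, ∃ e ∈ X, fn.R e c}

/-- `X` is conflict-free in the AFN. -/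
def ConflictFree (X : Set α) : Prop := ¬ ∃ a ∈ X, ∃ b ∈ X, fn.R a b

/-- `X` is strongly coherent. -/
def StronglyCoherent (X : Set α) : Prop := fn.ConflictFree X ∧ fn.Coherent X

/-- The deactivated set `X⁺` of `X` in the AFN. -/
def deactivated (X : Set α) : Set α :=
  {a | (∃ e ∈ X, fn.R e a) ∨ ∃ B, fn.N B a ∧ X ∩ B = ∅}

/-- `X` defends `a` in the AFN. -/
def Defends (X : Set α) (a : α) : Prop :=
  fn.Coherent (X ∪ {a}) ∧ ∀ b, fn.R b a → b ∈ fn.discardedAtt X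

def Admissible (X : Set α) : Prop := fn.StronglyCoherent X ∧ ∀ a ∈ X, fn.Defends X a

def Complete (X : Set α) : Prop := fn.Admissible X ∧ ∀ a, fn.Defends X a → a ∈ X

def Preferred (X : Set α) : Prop :=
  fn.Admissible X ∧ ∀ Y, fn.Admissible Y → X ⊆ Y → X = Y

/-- `X` is the grounded extension: the least complete extension. -/
def IsGrounded (X : Set α) : Prop := fn.Complete X ∧ ∀ Y, fn.Complete Y → X ⊆ Y

/-- Stability via completeness and the deactivated set. -/
def Stable (X : Set α) : Prop := fn.Complete X ∧ fn.deactivated X = Xᶜ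

/-- Stability via strong coherence and the discarded set. -/
def StableAtt (X : Set α) : Prop :=
  fn.StronglyCoherent X ∧ fn.discardedAtt X = Xᶜ

/-- Strong consistency of an AFN: no argument is both supported and attacked by
the same argument. -/
def StronglyConsistent : Prop :=
  ∀ a : α, {b | ∃ B, b ∈ B ∧ fn.N B a} ∩ {b | fn.R b a} = ∅

/-- The ADF corresponding to a strongly consistent AFN. -/
noncomputable def toADF : ADF α where
  L x y := fn.R x y ∨ ∃ B, x ∈ B ∧ fn.N B y
  C a P := decide (¬ ((∃ p ∈ P, fn.R p a) ∨ ∃ Z, fn.N Z a ∧ Z ∩ P = ∅))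

end AFN

end Dialectical


/-!
`X⁺ ⊆ X^{p+}`: in the corresponding ADF an interpretation is decisively in for `s` exactly when
every attacker of `s` is false or its attack is defense-attacked by true arguments (strong
consistency keeps the attacker itself out of that defense). An evaluation avoiding `X` must
therefore counter every `X`-attack on its members from their own positive dependencies, so a
reinstatement set would either hit the cyclic part, which lies in `X` and so blocks the defeat,
or descend forever along the acyclic part.

`X^{p+} ⊆ X⁺`: the arguments whose `X`-attacks are all defense-attacked from `X` and earlier
arguments form increasing stages. Outside their limit every argument is discarded, a single
reinstatement set serving all of them. Inside, taking the positive dependencies of `t` from `X`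
and the stage below `t` makes every dependency cycle lie in `X`, and what `a` depends on outside
the cycles can be listed acyclically.
-/

namespace Dialectical

variable {α : Type*}

open Relation

@[simp]
theorem tset_mkInterp (T F' : Set α) : tset (mkInterp T F') = T := by
  ext z
  by_cases hT : z ∈ T <;> simp [tset, mkInterp, hT]

@[simp]
theorem fset_mkInterp (T F' : Set α) : fset (mkInterp T F') = F' \ T := by
  ext z
  by_cases hT : z ∈ T <;> by_cases hF : z ∈ F' <;> simp [fset, mkInterp, hT, hF]

theorem pdT_of_eq_some {pd : α → Option (Interp α)} {t : α} {v : Interp α}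
    (hv : pd t = some v) : pdT pd t = tset v := by
  ext b
  simp [pdT, hv]

theorem pdF_of_eq_some {pd : α → Option (Interp α)} {t : α} {v : Interp α}
    (hv : pd t = some v) : pdF pd t = fset v := by
  ext b
  simp [pdF, hv]

def IsDepOrdered (deps : α → Set α) (F : Set α) (G : List α) : Prop :=
  ∀ i (h : i < G.length), deps (G.get ⟨i, h⟩) ⊆
    F ∪ {b | ∃ j, ∃ hj : j < G.length, j < i ∧ G.get ⟨j, hj⟩ = b}

theorem IsDepOrdered.append_singleton {deps : α → Set α} {F : Set α} {G : List α}
    (hG : IsDepOrdered deps F G) {a : α} (ha : deps a ⊆ F ∪ {b | b ∈ G}) :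
    IsDepOrdered deps F (G ++ [a]) := by
  intro i hi
  simp only [List.length_append, List.length_singleton, List.get_eq_getElem] at hi ⊢
  rcases Nat.lt_or_ge i G.length with hiG | hiG
  · rw [List.getElem_append_left hiG]
    refine (hG i hiG).trans (Set.union_subset_union_right F ?_)
    rintro b ⟨j, hj, hji, rfl⟩
    exact ⟨j, by simp; omega, hji, by simp [List.getElem_append_left hj]⟩
  · obtain rfl : i = G.length := by omega
    rw [List.getElem_concat_length rfl]
    refine ha.trans (Set.union_subset_union_right F ?_)
    intro b hb
    obtain ⟨j, hj, rfl⟩ := List.getElem_of_mem hb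
    exact ⟨j, by simp; omega, hj, by simp [List.getElem_append_left hj]⟩

theorem exists_source_of_acyclic [Finite α] {r : α → α → Prop} {S : Set α} (hS : S.Nonempty)
    (hacyc : ∀ t ∈ S, ¬ TransGen r t t) : ∃ m ∈ S, ∀ t ∈ S, ¬ r t m := by
  let q : α → α → Prop := fun u v => u ∈ S ∧ TransGen r u v
  have : IsTrans α q := ⟨fun _ _ _ h₁ h₂ => ⟨h₁.1, h₁.2.trans h₂.2⟩⟩
  have : Std.Irrefl q := ⟨fun t h => hacyc t h.1 h.2⟩
  obtain ⟨m, hm, hmin⟩ := (Finite.wellFounded_of_trans_of_irrefl q).has_min S hS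
  exact ⟨m, hm, fun t ht hr => hmin t ht ⟨ht, .single hr⟩⟩

theorem exists_nodup_isDepOrdered [Finite α] (deps : α → Set α) (F S : Set α)
    (hclosed : ∀ t ∈ S, deps t ⊆ F ∪ S)
    (hacyc : ∀ t ∈ S, ¬ TransGen (fun t w => w ∈ deps t) t t) :
    ∃ G : List α, G.Nodup ∧ (∀ b, b ∈ G ↔ b ∈ S) ∧ IsDepOrdered deps F G := by
  induction hn : S.ncard using Nat.strong_induction_on generalizing S with
  | _ n ih =>
  rcases S.eq_empty_or_nonempty with rfl | hne
  · exact ⟨[], List.nodup_nil, by simp, fun i hi => by simp at hi⟩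
  obtain ⟨m, hmS, hsrc⟩ := exists_source_of_acyclic hne hacyc
  have hlt : (S \ {m}).ncard < n := hn ▸ Set.ncard_sdiff_singleton_lt_of_mem hmS
  obtain ⟨G, hnd, hmem, hord⟩ := ih _ hlt (S \ {m})
    (fun t ht w hw => (hclosed t ht.1 hw).imp_right fun hwS =>
      ⟨hwS, fun hwm => hsrc t ht.1 (Set.mem_singleton_iff.1 hwm ▸ hw)⟩)
    (fun t ht => hacyc t ht.1) rfl
  refine ⟨G ++ [m], ?_, ?_, hord.append_singleton ?_⟩
  · exact List.nodup_append.2 ⟨hnd, List.nodup_singleton m,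
      fun b hb c hc hbc => ((hmem b).1 hb).2 (by simp_all)⟩
  · intro b
    by_cases hbm : b = m <;> simp [hmem, hbm, hmS]
  · intro w hw
    refine (hclosed m hmS hw).imp_right fun hwS => (hmem w).2 ⟨hwS, ?_⟩
    rintro rfl
    exact hacyc w hmS (.single hw)

theorem mem_of_transGen_self {r : α → α → Prop} {U X : Set α} (h : α → ℕ)
    (hU : ∀ t ∈ U, ∀ w, r t w → w ∈ U) (hX : ∀ t ∈ U, t ∈ X → ∀ w, r t w → w ∈ X)
    (hh : ∀ t ∈ U, ∀ w, r t w → w ∈ X ∨ h w < h t) {t : α} (ht : t ∈ U)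
    (hcyc : TransGen r t t) : t ∈ X := by
  have key : ∀ s u, s ∈ U → TransGen r s u → u ∉ X → s ∉ X ∧ h u < h s := by
    intro s u hs hsu hu
    induction hsu using TransGen.head_induction_on with
    | single hsu =>
      exact ⟨fun hsX => hu (hX _ hs hsX _ hsu), (hh _ hs _ hsu).resolve_left hu⟩
    | head hsv _ ih =>
      obtain ⟨hvX, hlt⟩ := ih (hU _ hs _ hsv)
      exact ⟨fun hsX => hvX (hX _ hs hsX _ hsv), hlt.trans ((hh _ hs _ hsv).resolve_left hvX)⟩
  by_contra htX
  exact (key t t ht hcyc htX).2.false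

/-- The cyclic part `Fs` consists of everything reachable from a cycle; the rest of what `a`
reaches is listed in topological order. -/
theorem exists_isPAEvalWith [Finite α] (pd : α → Option (Interp α)) (hpd : ∀ t, pd t ≠ none)
    {U X : Set α} {a : α} (haU : a ∈ U) (hU : ∀ t ∈ U, pdT pd t ⊆ U)
    (hcyc : ∀ t ∈ U, TransGen (fun t w => w ∈ pdT pd t) t t → t ∈ X)
    (hX : ∀ t ∈ U, t ∈ X → pdT pd t ⊆ X) (hF : ∀ t ∈ U, pdF pd t ∩ X = ∅) :
    ∃ Fs G B, IsPAEvalWith pd Set.univ a Fs G B ∧ Fs ⊆ X ∧ B ∩ X = ∅ := by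
  set dep : α → α → Prop := fun t w => w ∈ pdT pd t
  set T : Set α := {t | ReflTransGen dep a t}
  set Fs : Set α := {t | ∃ c ∈ T, TransGen dep c c ∧ ReflTransGen dep c t}
  have hTU : T ⊆ U := fun t ht => by
    induction ht with
    | refl => exact haU
    | tail _ hst ih => exact hU _ ih hst
  have hFsT : Fs ⊆ T := fun t ⟨c, hc, _, hct⟩ => hc.trans hct
  have hFsX : Fs ⊆ X := by
    rintro t ⟨c, hc, hcc, hct⟩
    have hcU := hTU hc
    induction hct with
    | refl => exact hcyc c hcU hcc
    | tail hcs hst ih => exact hX _ (hTU (hc.trans hcs)) ih hst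
  have hFs_closed : ∀ t ∈ Fs, pdT pd t ⊆ Fs :=
    fun t ⟨c, hc, hcc, hct⟩ w hw => ⟨c, hc, hcc, hct.tail hw⟩
  have hFs_pred : ∀ t ∈ Fs, ∃ b ∈ Fs, t ∈ pdT pd b := by
    rintro t ⟨c, hc, hcc, hct⟩
    rcases hct.cases_tail with rfl | ⟨p, hcp, hpt⟩
    · obtain ⟨p, hcp, hpt⟩ := TransGen.tail'_iff.1 hcc
      exact ⟨p, ⟨t, hc, hcc, hcp⟩, hpt⟩
    · exact ⟨p, ⟨c, hc, hcc, hcp⟩, hpt⟩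
  obtain ⟨G, hnd, hGFs, hGT, hGnil, hGlast, hord⟩ : ∃ G : List α, G.Nodup ∧ (∀ g ∈ G, g ∉ Fs) ∧
      (∀ g ∈ G, g ∈ T) ∧ (G = [] → a ∈ Fs) ∧ (G ≠ [] → G.getLast? = some a) ∧
      IsDepOrdered (pdT pd) Fs G := by
    by_cases haFs : a ∈ Fs
    · exact ⟨[], List.nodup_nil, by simp, by simp, fun _ => haFs, fun h => absurd rfl h,
        fun i hi => by simp at hi⟩
    have hna : ∀ t ∈ T, a ∉ pdT pd t := fun t ht hat =>
      haFs ⟨a, .refl, TransGen.tail' ht hat, .refl⟩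
    obtain ⟨G, hnd, hmem, hord⟩ := exists_nodup_isDepOrdered (pdT pd) Fs ((T \ Fs) \ {a})
      (fun t ht w hw => by
        by_cases hwFs : w ∈ Fs
        · exact .inl hwFs
        · exact .inr ⟨⟨ht.1.1.tail hw, hwFs⟩, fun hwa => hna t ht.1.1 (hwa ▸ hw)⟩)
      (fun t ht hcyc => ht.1.2 ⟨t, ht.1.1, hcyc, .refl⟩)
    refine ⟨G ++ [a], ?_, ?_, ?_, by simp, fun _ => List.getLast?_concat, hord.append_singleton ?_⟩
    · exact List.nodup_append.2 ⟨hnd, List.nodup_singleton a,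
        fun b hb c hc hbc => ((hmem b).1 hb).2 (by simp_all)⟩
    · intro g hg
      rcases List.mem_append.1 hg with hg | hg
      · exact ((hmem g).1 hg).1.2
      · exact (List.mem_singleton.1 hg) ▸ haFs
    · intro g hg
      rcases List.mem_append.1 hg with hg | hg
      · exact ((hmem g).1 hg).1.1
      · exact (List.mem_singleton.1 hg) ▸ .refl
    · intro w hw
      by_cases hwFs : w ∈ Fs
      · exact .inl hwFs
      · exact .inr ((hmem w).2 ⟨⟨ReflTransGen.single hw, hwFs⟩, fun hwa => hna a .refl (hwa ▸ hw)⟩)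
  refine ⟨Fs, G, _, ⟨hGFs, hnd, trivial, Set.subset_univ _, fun _ _ => trivial,
    fun t _ => hpd t, fun t _ => hpd t, hGnil, hGlast, hord, hFs_closed, hFs_pred, rfl⟩, hFsX, ?_⟩
  have hmemU : ∀ t, t ∈ Fs ∨ t ∈ G → t ∈ U := fun t ht =>
    hTU (ht.elim (fun h => hFsT h) (hGT t))
  ext c
  simp only [Set.mem_inter_iff, Set.mem_union, Set.mem_iUnion, Set.mem_ofPred_eq,
    Set.mem_empty_iff_false, iff_false, not_and]
  rintro (⟨t, ht, hc⟩ | ⟨t, ht, hc⟩) hcX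
  · exact (hF t (hmemU t (.inl ht))).subset ⟨hc, hcX⟩
  · exact (hF t (hmemU t (.inr ht))).subset ⟨hc, hcX⟩

namespace ADF

variable (D : ADF α)

theorem exists_minDecIn_le [Finite α] {v : Interp α} {s : α} (hv : D.DecisivelyIn v s) :
    ∃ w, D.MinDecIn w s ∧ tset w ⊆ tset v ∧ fset w ⊆ fset v := by
  obtain ⟨w, ⟨hw, hwt, hwf⟩, hmin⟩ := exists_minimalFor_of_wellFoundedLT
    (fun w => D.DecisivelyIn w s ∧ tset w ⊆ tset v ∧ fset w ⊆ fset v)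
    (fun w => (tset w, fset w)) ⟨v, hv, subset_rfl, subset_rfl⟩
  refine ⟨w, ⟨hw, fun u hu hut huf => ?_⟩, hwt, hwf⟩
  have := hmin ⟨hu, hut.trans hwt, huf.trans hwf⟩ ⟨hut, huf⟩
  exact ⟨hut.antisymm this.1, huf.antisymm this.2⟩

theorem maxSound_univ {pd : α → Option (Interp α)}
    (hpd : ∀ t, ∃ w, pd t = some w ∧ D.MinDecIn w t) : D.MaxSound Set.univ pd := by
  refine ⟨fun t _ => ⟨fun v hv => ?_, fun hnone => ?_⟩, ?_⟩
  · obtain ⟨w, hw, hmin⟩ := hpd t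
    obtain rfl : w = v := Option.some.inj (hw.symm.trans hv)
    exact ⟨hmin, Set.subset_univ _⟩
  · obtain ⟨w, hw, -⟩ := hpd t
    simp [hw] at hnone
  · rintro ⟨X'', -, -, -, hlt, -, -⟩
    refine hlt.2 fun t _ => ⟨trivial, ?_⟩
    obtain ⟨w, hw, -⟩ := hpd t
    simp [hw]

end ADF

namespace EAFC

variable (E : EAFC α)

theorem decisivelyIn_toADF_iff (hsc : E.StronglyConsistent) {v : Interp α} {s : α} :
    E.toADF.DecisivelyIn v s ↔
      ∀ x, E.R x s → v x = some false ∨ ∃ C ⊆ tset v, E.D C x s := by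
  have hpar : ∀ {x}, E.R x s → x ∈ E.toADF.par s := fun hx => Or.inl hx
  constructor
  · intro hv x hx
    refine or_iff_not_imp_left.2 fun hxf => ?_
    -- complete `v` by making `x` the only newly accepted parent of `s`
    let w : Interp α := fun z =>
      if z ∈ idom v then v z else if z ∈ E.toADF.par s then some (decide (z = x)) else none
    have hw : Completion v w (idom v ∪ E.toADF.par s) := by
      refine ⟨Set.ext fun z => ?_, fun z hz => if_pos hz⟩
      simp only [w, idom, Set.mem_ofPred_eq, Set.mem_union]
      split_ifs <;> simp_all
    have hwx : w x = some true := by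
      by_cases hxv : x ∈ idom v
      · have hxt : v x = some true := by
          rcases hvx : v x with _ | _ | _ <;> simp_all [idom]
        simp [w, hxv, hxt]
      · simp [w, hxv, hpar hx]
    have hin := hv w hw
    simp only [ADF.evalCond, toADF, decide_eq_true_eq] at hin
    push Not at hin
    obtain ⟨C, hC, hD⟩ := hin x ⟨hwx, hpar hx⟩ hx
    refine ⟨C, fun c hc => ?_, hD⟩
    have hcw : w c = some true := (hC hc).1
    by_cases hcv : c ∈ idom v
    · simpa [w, hcv, tset] using hcw
    · have hcx : c = x := (by simpa [w, hcv] using hcw : _ ∧ c = x).2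
      exact absurd ⟨x, s, x, C, hx, hcx ▸ hc, hD⟩ hsc
  · intro h w hw
    have htw : tset v ⊆ tset w := fun c hc => by
      rw [tset, Set.mem_ofPred_eq, hw.2 c (by simp [idom, hc.out])]
      exact hc
    simp only [ADF.evalCond, toADF, decide_eq_true_eq]
    rintro ⟨x, ⟨hxw, -⟩, hx, hnC⟩
    rcases h x hx with hxf | ⟨C, hCv, hD⟩
    · have : w x = v x := hw.2 x (by simp [idom, hxf])
      simp [tset, hxf, this] at hxw
    · exact hnC ⟨C, fun c hc => ⟨htw (hCv hc), Or.inr ⟨x, C, hc, hD⟩⟩, hD⟩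

noncomputable def counterInterp (P : Set α) (t : α) : Interp α :=
  mkInterp (P \ {x | E.R x t ∧ ¬ ∃ C ⊆ P, E.D C x t}) {x | E.R x t ∧ ¬ ∃ C ⊆ P, E.D C x t}

theorem decisivelyIn_counterInterp (hsc : E.StronglyConsistent) (P : Set α) (t : α) :
    E.toADF.DecisivelyIn (E.counterInterp P t) t := by
  rw [E.decisivelyIn_toADF_iff hsc]
  intro x hx
  by_cases hC : ∃ C ⊆ P, E.D C x t
  · obtain ⟨C, hCP, hD⟩ := hC
    refine .inr ⟨C, fun c hc => ?_, hD⟩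
    rw [counterInterp, tset_mkInterp]
    exact ⟨hCP hc, fun hct => hsc ⟨c, t, x, C, hct.1, hc, hD⟩⟩
  · left
    simp [counterInterp, mkInterp, hx, hC]

theorem exists_subset_pdT_of_maxSound (hsc : E.StronglyConsistent) {pd : α → Option (Interp α)}
    (hms : E.toADF.MaxSound Set.univ pd) {x y : α} (hy : pd y ≠ none) (hx : E.R x y)
    (hxf : x ∉ pdF pd y) : ∃ C ⊆ pdT pd y, E.D C x y := by
  obtain ⟨v, hv⟩ := Option.ne_none_iff_exists'.1 hy
  have hdec := (((hms.1 y trivial).1 v hv).1).1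
  rw [pdF_of_eq_some hv] at hxf
  rw [pdT_of_eq_some hv]
  exact ((E.decisivelyIn_toADF_iff hsc).1 hdec x hx).resolve_left hxf

theorem mem_pDiscarded_of_mem_discarded (hsc : E.StronglyConsistent) {X : Set α} {a : α}
    (ha : a ∈ E.discarded X) : a ∈ E.toADF.pDiscarded X := by
  rintro ⟨Fs, G, B, ⟨pd, hms, -, -, -, -, -, hFsn, hGn, hGnil, hGlast, hord, hFs_closed, -, hB⟩,
    hFsX, hBX⟩
  obtain ⟨b, -, hdef, RS, -, hRS, hba, hreinst⟩ := ha
  have hpdF : ∀ y, y ∈ Fs ∨ y ∈ G → pdF pd y ⊆ B := by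
    rintro y (hy | hy) c hc <;> rw [hB]
    · exact .inl (Set.mem_biUnion hy hc)
    · exact .inr (Set.mem_biUnion (show y ∈ {c | c ∈ G} from hy) hc)
  have hcounter : ∀ p ∈ RS, p.2 ∈ Fs ∨ p.2 ∈ G → ∃ C ⊆ pdT pd p.2, E.D C p.1 p.2 :=
    fun p hp hpY => E.exists_subset_pdT_of_maxSound hsc hms (hpY.elim (hFsn _) (hGn _))
      (hRS p hp).2.1 fun hf =>
        Set.eq_empty_iff_forall_notMem.1 hBX _ ⟨hpdF _ hpY hf, (hRS p hp).1⟩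
  have hFs : ∀ p ∈ RS, p.2 ∉ Fs := fun p hp hpF => by
    obtain ⟨C, hC, hD⟩ := hcounter p hp (.inl hpF)
    exact (hRS p hp).2.2 ⟨C, (hC.trans (hFs_closed _ hpF)).trans hFsX, hD⟩
  -- the reinstatement set always hits an earlier element of `G`, which cannot go on forever
  have hG : ∀ i (hi : i < G.length), ∀ p ∈ RS, p.2 ≠ G.get ⟨i, hi⟩ := by
    intro i
    induction i using Nat.strong_induction_on with
    | _ i ih =>
    intro hi p hp hpi
    obtain ⟨C, hC, hD⟩ := hcounter p hp (.inr (hpi ▸ List.get_mem _ _))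
    obtain ⟨q, hq, hqC⟩ := hreinst p hp C hD
    rcases hord i hi (hpi ▸ hC hqC) with hqF | ⟨j, hj, hji, hqj⟩
    · exact hFs q hq hqF
    · exact ih j hji hj q hq hqj.symm
  by_cases hGe : G = []
  · exact hFs _ hba (hGnil hGe)
  · obtain ⟨⟨i, hi⟩, hia⟩ := List.mem_iff_get.1 (List.mem_of_getLast? (hGlast hGe))
    exact hG i hi _ hba hia.symm

variable {E}

def shielded (X S : Set α) : Set α := {t | ∀ x ∈ X, E.R x t → ∃ C ⊆ X ∪ S, E.D C x t}

def shieldStage (X : Set α) (n : ℕ) : Set α := (E.shielded X)^[n] ∅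

noncomputable def shieldLevel (X : Set α) (t : α) : ℕ :=
  sInf {n | t ∈ E.shielded X (E.shieldStage X n)}

theorem shielded_mono {X S S' : Set α} (h : S ⊆ S') : E.shielded X S ⊆ E.shielded X S' :=
  fun _ ht x hx hR =>
    let ⟨C, hC, hD⟩ := ht x hx hR
    ⟨C, hC.trans (Set.union_subset_union_right X h), hD⟩

theorem subset_shielded {X : Set α} (hcf : E.ConflictFree X) (S : Set α) :
    X ⊆ E.shielded X S := fun t ht x hx hR => by
  by_contra hno
  exact hcf ⟨x, hx, t, ht, hR, fun ⟨C, hC, hD⟩ => hno ⟨C, hC.trans Set.subset_union_left, hD⟩⟩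

/-- Outside a pre-fixpoint `S`, each argument has an attacker from `X` all of whose defense
attacks contain a further argument outside `X ∪ S`; these attacks form one reinstatement set
for all of them. -/
theorem compl_subset_discarded [Finite α] {X S : Set α} (hS : E.shielded X S ⊆ S) :
    Sᶜ ⊆ E.discarded X := by
  have hkey : ∀ s ∉ S, ∃ x ∈ X, E.R x s ∧ ∀ C, E.D C x s → ∃ y ∈ C, y ∉ X ∪ S := by
    intro s hs
    by_contra! h
    exact hs (hS fun x hx hR => let ⟨C, hD, hC⟩ := h x hx hR; ⟨C, hC, hD⟩)
  choose att hattX hattR hatt using hkey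
  have hdef : ∀ s (hs : s ∉ S), E.Defeats X (att s hs) s := fun s hs =>
    ⟨hattR s hs, fun ⟨C, hCX, hD⟩ =>
      let ⟨y, hyC, hy⟩ := hatt s hs C hD
      hy (.inl (hCX hyC))⟩
  intro t ht
  refine ⟨att t ht, hattX t ht, hdef t ht, {p | ∃ s, ∃ hs : s ∉ S, p = (att s hs, s)},
    Set.toFinite _, ?_, ⟨t, ht, rfl⟩, ?_⟩
  · rintro _ ⟨s, hs, rfl⟩
    exact ⟨hattX s hs, hdef s hs⟩
  · rintro _ ⟨s, hs, rfl⟩ C hD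
    obtain ⟨y, hyC, hy⟩ := hatt s hs C hD
    have hyS : y ∉ S := fun h => hy (.inr h)
    exact ⟨_, ⟨y, hyS, rfl⟩, hyC⟩

theorem shieldStage_succ (X : Set α) (n : ℕ) :
    E.shieldStage X (n + 1) = E.shielded X (E.shieldStage X n) :=
  Function.iterate_succ_apply' _ _ _

theorem shieldStage_mono (X : Set α) : Monotone (E.shieldStage X) := by
  refine monotone_nat_of_le_succ fun n => ?_
  induction n with
  | zero => exact Set.empty_subset _
  | succ n ih =>
    rw [shieldStage_succ, shieldStage_succ]
    exact shielded_mono ih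

theorem exists_shielded_shieldStage_subset [Finite α] (X : Set α) :
    ∃ N, E.shielded X (E.shieldStage X N) ⊆ E.shieldStage X N := by
  obtain ⟨N, hN⟩ := WellFoundedGT.monotone_chain_condition ⟨_, E.shieldStage_mono X⟩
  exact ⟨N, by rw [← shieldStage_succ]; exact (hN (N + 1) N.le_succ).symm.subset⟩

theorem shieldLevel_lt {X : Set α} {t : α} {n : ℕ} (ht : t ∈ E.shieldStage X n) :
    E.shieldLevel X t < n := by
  cases n with
  | zero => exact absurd ht (Set.notMem_empty t)
  | succ n =>
    rw [shieldStage_succ] at ht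
    exact Nat.lt_succ_of_le (Nat.sInf_le ht)

theorem mem_shielded_shieldLevel {X : Set α} {t : α} {n : ℕ} (ht : t ∈ E.shieldStage X n) :
    t ∈ E.shielded X (E.shieldStage X (E.shieldLevel X t)) := by
  cases n with
  | zero => exact absurd ht (Set.notMem_empty t)
  | succ n =>
    rw [shieldStage_succ] at ht
    exact Nat.sInf_mem (s := {k | t ∈ E.shielded X (E.shieldStage X k)}) ⟨n, ht⟩

theorem shieldLevel_eq_zero {X : Set α} (hcf : E.ConflictFree X) {t : α} (ht : t ∈ X) :
    E.shieldLevel X t = 0 :=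
  Nat.eq_zero_of_le_zero (Nat.sInf_le (subset_shielded hcf _ ht))

/-- Choosing the positive dependencies of `t` from `X ∪ E.shieldStage X (E.shieldLevel X t)`,
every dependency outside `X` has a smaller level, so all cycles lie in `X`. -/
theorem notMem_pDiscarded_of_notMem_discarded [Finite α] (hsc : E.StronglyConsistent)
    {X : Set α} (hcf : E.ConflictFree X) {a : α} (ha : a ∉ E.discarded X) :
    a ∉ E.toADF.pDiscarded X := by
  obtain ⟨N, hN⟩ := exists_shielded_shieldStage_subset (E := E) X
  set U := E.shieldStage X N
  have haU : a ∈ U := by_contra fun h => ha (compl_subset_discarded hN h)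
  set pool : α → Set α := fun t => X ∪ E.shieldStage X (E.shieldLevel X t)
  choose m hm hmt hmf using fun t =>
    E.toADF.exists_minDecIn_le (E.decisivelyIn_counterInterp hsc (pool t) t)
  set pd : α → Option (Interp α) := fun t => some (m t)
  have hpdT : ∀ t, pdT pd t ⊆ pool t := fun t => by
    rw [pdT_of_eq_some rfl]
    exact (hmt t).trans (by simp [counterInterp])
  have hpdF : ∀ t ∈ U, pdF pd t ∩ X = ∅ := fun t ht => by
    rw [pdF_of_eq_some rfl, Set.eq_empty_iff_forall_notMem]
    rintro x ⟨hxf, hxX⟩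
    have hx := hmf t hxf
    rw [counterInterp, fset_mkInterp] at hx
    exact hx.1.2 (mem_shielded_shieldLevel ht x hxX hx.1.1)
  have hX : ∀ t ∈ U, t ∈ X → pdT pd t ⊆ X := fun t _ htX => by
    simpa [pool, shieldLevel_eq_zero hcf htX, shieldStage] using hpdT t
  have hlevel : ∀ t ∈ U, ∀ w ∈ pdT pd t, w ∈ X ∨ E.shieldLevel X w < E.shieldLevel X t :=
    fun t _ w hw => (hpdT t hw).imp_right shieldLevel_lt
  have hU : ∀ t ∈ U, pdT pd t ⊆ U := fun t ht => (hpdT t).trans <|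
    Set.union_subset ((subset_shielded hcf _).trans hN)
      (E.shieldStage_mono X (shieldLevel_lt ht).le)
  intro hp
  obtain ⟨Fs, G, B, hev, hFsX, hBX⟩ := exists_isPAEvalWith pd (fun _ => Option.some_ne_none _)
    haU hU (fun t ht => mem_of_transGen_self (E.shieldLevel X) hU hX hlevel ht) hX hpdF
  exact hp ⟨Fs, G, B, ⟨pd, E.toADF.maxSound_univ fun t => ⟨m t, rfl, hm t⟩, hev⟩, hFsX, hBX⟩

end EAFC

end Dialectical

open Dialectical in
/-- for a conflict-free `X`, the EAFC discarded set `X⁺` coincides with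
the partially acyclic discarded set `X^{p+}` of the corresponding ADF. -/
theorem eafc_toADF_discarded
    {α : Type} [Fintype α] (E : EAFC α) (h : E.StronglyConsistent)
    (X : Set α) (hcf : E.ConflictFree X) :
    E.discarded X = E.toADF.pDiscarded X := by
  ext a
  exact ⟨E.mem_pDiscarded_of_mem_discarded h,
    not_imp_not.1 (EAFC.notMem_pDiscarded_of_notMem_discarded h hcf)⟩
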